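/- Let W̃(x) := 1 + (1/2)·(x₂/(1+x₁²))² + F(arctan x₁) and W(t,x) := W̃(ζ_d(t)+x). Let ψ₁, ψ₂, ψ₃, ψ₄ : [0,∞) → [0,∞) be continuous non-decreasing functions with max{ |∇g₁(ζ)| : |ζ| ≤ Λ₁+s } ≤ ψ₁(s), max{ |∇g₂(ζ)| : |ζ| ≤ Λ₁+s } ≤ ψ₂(s), max{ |∇W̃(x)| : |x| ≤ Λ₁+s } ≤ ψ₃(s), and max{ |∇²W̃(x)| : |x| ≤ Λ₁+s } ≤ ψ₄(s) for all s ≥ 0, where Λ₁ := sup_{t≥0}|ζ_d(t)|, Λ₂ := sup_{t≥−τ}|v_d(t)|, Λ₃ := sup_{t≥0}|ζ̇_d(t)|, Λ₄ := sup_{t≥−τ}|v̇_d(t)|, Λ₅ := sup_{t≥0}|ζ̈_d(t)|. Define P(s) := (2Λ₃ψ₁(s) + 2Λ₂Λ₃ψ₂(s) + (Λ₄+Λ₃)sψ₂(s))² + ψ₃(s)² + 1 + ψ₄(s(1+τL(s)))·(Λ₃ + sL(s))² + Λ₅·ψ₃(s(1+τL(s))). Then P satisfies, for all s ≥ 0: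 (i) P(s) ≥ 1 + sup{ |∂ₜₜW(t,ξ)| + 2sL(s)|∂ₜ∇ₓW(t,ξ)| + s²L(s)²|∇ₓ²W(t,ξ)| : |ξ| ≤ s(1+τL(s)), t ≥ 0 }; (ii) |∇ₓW(t,x)| ≤ √(P(|x|)) for all t ≥ 0, x ∈ ℝ²; (iii) |f(s',x,u) − f(t,x,u)| ≤ (s'−t)·√(P(|x|+|u|)) for all s' ≥ t ≥ 0, x ∈ ℝ², u ∈ ℝ. -/

import Mathlib

/-! Along the curve γ(t) = ζ_d(t) + ξ the chain rule gives ∂ₜW = ⟪∇W̃(γ), ζ̇_d⟫ and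
∂ₜₜW = ⟪∇W̃(γ), ζ̈_d⟫ + ⟪∇²W̃(γ) ζ̇_d, ζ̇_d⟫, while ∂ₜ∇ₓW = ∇²W̃(γ) ζ̇_d and ∇ₓ²W = ∇²W̃(γ).
Since |γ| ≤ Λ₁ + s(1 + τL(s)), the bounds ψ₃, ψ₄ turn the left side of (i) into the expansion
of 1 + ψ₄(·)(Λ₃ + sL(s))² + Λ₅ψ₃(·), and (ii) is the bound ψ₃ itself. In (iii) only the second
component of f depends on time; its time derivative is at most the first summand of P by the
chain rule, the mean value bound |g₂(ζ_d + x) − g₂(ζ_d)| ≤ ψ₂(s)|x| and the suprema Λ₂, Λ₃, Λ₄,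
so the mean value theorem on [t, s'] gives (iii). -/

open Set Real Filter

noncomputable def vec2 (a b : ℝ) : EuclideanSpace ℝ (Fin 2) :=
  (WithLp.equiv 2 (Fin 2 → ℝ)).symm ![a, b]

noncomputable def g1f (F H : ℝ → ℝ) (ζ : EuclideanSpace ℝ (Fin 2)) : ℝ :=
  -(1 + (ζ 0) ^ 2) * deriv F (Real.arctan (ζ 0))
    + (2 * ζ 0 / (1 + (ζ 0) ^ 2)) * (ζ 1) ^ 2
    - (1 + (ζ 0) ^ 2) * H (ζ 1 / (1 + (ζ 0) ^ 2))

noncomputable def g2f (G : ℝ → ℝ → ℝ) (ζ : EuclideanSpace ℝ (Fin 2)) : ℝ :=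
  (1 + (ζ 0) ^ 2) * G (Real.arctan (ζ 0)) (ζ 1 / (1 + (ζ 0) ^ 2))

noncomputable def Wtilde (F : ℝ → ℝ) (x : EuclideanSpace ℝ (Fin 2)) : ℝ :=
  1 + (1 / 2) * (x 1 / (1 + (x 0) ^ 2)) ^ 2 + F (Real.arctan (x 0))

open InnerProductSpace RealInnerProductSpace

theorem le_of_eq_csSup_image {α : Type*} {g : α → ℝ} {s : Set α} {Λ : ℝ}
    (hb : BddAbove (g '' s)) (hΛ : Λ = sSup (g '' s)) {r : α} (hr : r ∈ s) : g r ≤ Λ :=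
  hΛ ▸ le_csSup hb (mem_image_of_mem g hr)

theorem le_of_eq_sq_add_sq_add_one_add_add {P B c d e : ℝ} (hP : P = B ^ 2 + c ^ 2 + 1 + d + e)
    (hd : 0 ≤ d) (he : 0 ≤ e) : B ^ 2 ≤ P ∧ c ^ 2 ≤ P ∧ 1 + d + e ≤ P := by
  subst hP
  refine ⟨?_, ?_, ?_⟩ <;> nlinarith [sq_nonneg B, sq_nonneg c]

section SecondOrder

variable {E : Type*} [NormedAddCommGroup E] [InnerProductSpace ℝ E]

theorem one_add_second_order_terms_le {g v w : E} {A : E →L[ℝ] E} {a b c₁ c₂ s ℓ : ℝ}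
    (hg : ‖g‖ ≤ a) (hA : ‖A‖ ≤ b) (hv : ‖v‖ ≤ c₁) (hw : ‖w‖ ≤ c₂) (hs : 0 ≤ s) (hℓ : 0 ≤ ℓ) :
    1 + |⟪g, w⟫ + ⟪A v, v⟫| + 2 * s * ℓ * ‖A v‖ + s ^ 2 * ℓ ^ 2 * ‖A‖
      ≤ 1 + b * (c₁ + s * ℓ) ^ 2 + c₂ * a := by
  have hb : 0 ≤ b := (norm_nonneg A).trans hA
  have hgw : |⟪g, w⟫| ≤ a * c₂ := (abs_real_inner_le_norm g w).trans
    (mul_le_mul hg hw (norm_nonneg w) ((norm_nonneg g).trans hg))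
  have hAv : ‖A v‖ ≤ b * c₁ := (A.le_opNorm v).trans (mul_le_mul hA hv (norm_nonneg v) hb)
  have hAvv : |⟪A v, v⟫| ≤ b * c₁ * c₁ := (abs_real_inner_le_norm _ v).trans
    (mul_le_mul hAv hv (norm_nonneg v) ((norm_nonneg _).trans hAv))
  have hsℓ : 0 ≤ s * ℓ := mul_nonneg hs hℓ
  have h₁ : 2 * s * ℓ * ‖A v‖ ≤ 2 * s * ℓ * (b * c₁) := by gcongr
  have h₂ : s ^ 2 * ℓ ^ 2 * ‖A‖ ≤ s ^ 2 * ℓ ^ 2 * b := by gcongr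
  linarith [abs_add_le ⟪g, w⟫ ⟪A v, v⟫]

end SecondOrder

section Gradient

variable {E : Type*} [NormedAddCommGroup E] [InnerProductSpace ℝ E] [CompleteSpace E]
  {f : E → ℝ}

theorem norm_gradient_eq_norm_fderiv (x : E) : ‖gradient f x‖ = ‖fderiv ℝ f x‖ :=
  (toDual ℝ E).symm.norm_map _

theorem fderiv_apply_eq_inner_gradient (x v : E) : fderiv ℝ f x v = ⟪gradient f x, v⟫ :=
  toDual_symm_apply.symm

theorem gradient_comp_add_left (a x : E) :
    gradient (fun y => f (a + y)) x = gradient f (a + x) := by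
  rw [gradient, gradient, fderiv_comp_add_left]

theorem ContDiff.contDiff_gradient {n m : WithTop ℕ∞} (hf : ContDiff ℝ n f) (hmn : m + 1 ≤ n) :
    ContDiff ℝ m (gradient f) :=
  ((toDual ℝ E).symm.toLinearIsometry.toContinuousLinearMap : StrongDual ℝ E →L[ℝ] E).contDiff.comp
    (hf.fderiv_right hmn)

theorem ContDiff.differentiable_gradient (hf : ContDiff ℝ 2 f) : Differentiable ℝ (gradient f) :=
  (hf.contDiff_gradient (m := 1) le_rfl).differentiable one_ne_zero

theorem abs_image_sub_le_of_norm_gradient_le {R a : ℝ} (hf : Differentiable ℝ f)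
    (hbound : ∀ z, ‖z‖ ≤ R → ‖gradient f z‖ ≤ a) {x y : E} (hx : ‖x‖ ≤ R) (hy : ‖y‖ ≤ R) :
    |f y - f x| ≤ a * ‖y - x‖ := by
  refine (convex_closedBall (0 : E) R).norm_image_sub_le_of_norm_fderiv_le (fun z _ => hf z)
    (fun z hz => ?_) (by simpa using hx) (by simpa using hy)
  rw [← norm_gradient_eq_norm_fderiv]
  exact hbound z (by simpa using hz)

end Gradient

section Curve

variable {E : Type*} [NormedAddCommGroup E] [InnerProductSpace ℝ E] [CompleteSpace E]
  {f : E → ℝ} {γ : ℝ → E}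

theorem DifferentiableAt.hasDerivAt_comp {γ' : E} {t : ℝ} (hf : DifferentiableAt ℝ f (γ t))
    (hγ : HasDerivAt γ γ' t) : HasDerivAt (fun r => f (γ r)) ⟪gradient f (γ t), γ'⟫ t := by
  rw [← fderiv_apply_eq_inner_gradient]
  exact hf.hasFDerivAt.comp_hasDerivAt t hγ

theorem ContDiff.hasDerivAt_inner_gradient_comp {γ' : ℝ → E} {γ'' : E} {t : ℝ}
    (hf : ContDiff ℝ 2 f) (hγ : HasDerivAt γ (γ' t) t) (hγ' : HasDerivAt γ' γ'' t) :
    HasDerivAt (fun r => ⟪gradient f (γ r), γ' r⟫)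
      (⟪gradient f (γ t), γ''⟫ + ⟪fderiv ℝ (gradient f) (γ t) (γ' t), γ' t⟫) t :=
  ((hf.differentiable_gradient _).hasFDerivAt.comp_hasDerivAt t hγ).inner ℝ hγ'

variable {γ' γ'' : ℝ → E} {t : ℝ}

theorem derivWithin_Ici_comp (hf : Differentiable ℝ f) (hγ : ∀ r ≥ 0, HasDerivAt γ (γ' r) r)
    (ht : 0 ≤ t) : derivWithin (fun r => f (γ r)) (Ici 0) t = ⟪gradient f (γ t), γ' t⟫ :=
  ((hf _).hasDerivAt_comp (hγ t ht)).hasDerivWithinAt.derivWithin (uniqueDiffOn_Ici 0 t ht)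

theorem derivWithin_Ici_derivWithin_Ici_comp (hf : ContDiff ℝ 2 f)
    (hγ : ∀ r ≥ 0, HasDerivAt γ (γ' r) r ∧ HasDerivAt γ' (γ'' r) r) (ht : 0 ≤ t) :
    derivWithin (fun s => derivWithin (fun r => f (γ r)) (Ici 0) s) (Ici 0) t
      = ⟪gradient f (γ t), γ'' t⟫ + ⟪fderiv ℝ (gradient f) (γ t) (γ' t), γ' t⟫ := by
  have hfirst : EqOn (fun s => derivWithin (fun r => f (γ r)) (Ici 0) s)
      (fun s => ⟪gradient f (γ s), γ' s⟫) (Ici 0) := fun s hs =>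
    derivWithin_Ici_comp (hf.differentiable two_ne_zero) (fun r hr => (hγ r hr).1) hs
  rw [derivWithin_congr hfirst (hfirst ht)]
  exact (hf.hasDerivAt_inner_gradient_comp (hγ t ht).1 (hγ t ht).2).hasDerivWithinAt.derivWithin
    (uniqueDiffOn_Ici 0 t ht)

theorem derivWithin_Ici_gradient_comp (hf : ContDiff ℝ 2 f)
    (hγ : ∀ r ≥ 0, HasDerivAt γ (γ' r) r) (ht : 0 ≤ t) :
    derivWithin (fun r => gradient f (γ r)) (Ici 0) t = fderiv ℝ (gradient f) (γ t) (γ' t) :=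
  ((hf.differentiable_gradient _).hasFDerivAt.comp_hasDerivAt t
    (hγ t ht)).hasDerivWithinAt.derivWithin (uniqueDiffOn_Ici 0 t ht)

theorem one_add_shifted_deriv_terms_le {ξ : E} {a b c₁ c₂ s ℓ : ℝ}
    (hf : ContDiff ℝ 2 f) (hγ : ∀ r ≥ 0, HasDerivAt γ (γ' r) r ∧ HasDerivAt γ' (γ'' r) r)
    (ht : 0 ≤ t) (hg : ‖gradient f (γ t + ξ)‖ ≤ a) (hA : ‖fderiv ℝ (gradient f) (γ t + ξ)‖ ≤ b)
    (hv : ‖γ' t‖ ≤ c₁) (hw : ‖γ'' t‖ ≤ c₂) (hs : 0 ≤ s) (hℓ : 0 ≤ ℓ) :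
    1 + |derivWithin (fun s' => derivWithin (fun s'' => f (γ s'' + ξ)) (Ici 0) s') (Ici 0) t|
        + 2 * s * ℓ * ‖derivWithin (fun s' => gradient (fun y => f (γ s' + y)) ξ) (Ici 0) t‖
        + s ^ 2 * ℓ ^ 2 * ‖fderiv ℝ (fun y => gradient (fun y' => f (γ t + y')) y) ξ‖
      ≤ 1 + b * (c₁ + s * ℓ) ^ 2 + c₂ * a := by
  have hγξ : ∀ r ≥ 0, HasDerivAt (fun r => γ r + ξ) (γ' r) r ∧ HasDerivAt γ' (γ'' r) r :=
    fun r hr => ⟨(hγ r hr).1.add_const ξ, (hγ r hr).2⟩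
  simp only [gradient_comp_add_left]
  rw [fderiv_comp_add_left, derivWithin_Ici_derivWithin_Ici_comp hf hγξ ht,
    derivWithin_Ici_gradient_comp hf (fun r hr => (hγξ r hr).1) ht]
  exact one_add_second_order_terms_le hg hA hv hw hs hℓ

end Curve

section Drift

variable {E : Type*} [NormedAddCommGroup E] [InnerProductSpace ℝ E] [CompleteSpace E]

/-- The second component f̃(r, x) + g̃(r, x) u of the tracking-error vector field. -/
def errorDrift (g₁ g₂ : E → ℝ) (ζ : ℝ → E) (v : ℝ → ℝ) (τ : ℝ) (x : E) (u r : ℝ) : ℝ :=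
  g₁ (ζ r + x) - g₁ (ζ r) + (g₂ (ζ r + x) - g₂ (ζ r)) * v (r - τ) + g₂ (ζ r + x) * u

variable {g₁ g₂ : E → ℝ} {ζ ζ' : ℝ → E} {v v' : ℝ → ℝ} {τ : ℝ} (x : E) (u : ℝ)

theorem hasDerivAt_errorDrift (hg₁ : Differentiable ℝ g₁) (hg₂ : Differentiable ℝ g₂)
    {r c' : ℝ} {z : E} (hζ : HasDerivAt ζ z r) (hv : HasDerivAt v c' (r - τ)) :
    HasDerivAt (errorDrift g₁ g₂ ζ v τ x u)
      (⟪gradient g₁ (ζ r + x), z⟫ - ⟪gradient g₁ (ζ r), z⟫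
        + ((⟪gradient g₂ (ζ r + x), z⟫ - ⟪gradient g₂ (ζ r), z⟫) * v (r - τ)
          + (g₂ (ζ r + x) - g₂ (ζ r)) * c')
        + ⟪gradient g₂ (ζ r + x), z⟫ * u) r := by
  have hζx := hζ.add_const x
  have hg₂x := (hg₂ _).hasDerivAt_comp hζx
  exact (((hg₁ _).hasDerivAt_comp hζx).sub ((hg₁ _).hasDerivAt_comp hζ)).add
    ((hg₂x.sub ((hg₂ _).hasDerivAt_comp hζ)).mul (hv.comp_sub_const r τ)) |>.add (hg₂x.mul_const u)

theorem abs_errorDrift_deriv_le {p₁ q₁ p₂ q₂ d c c' u a₁ a₂ Λ₂ Λ₃ Λ₄ s : ℝ}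
    (hp₁ : |p₁| ≤ a₁ * Λ₃) (hq₁ : |q₁| ≤ a₁ * Λ₃) (hp₂ : |p₂| ≤ a₂ * Λ₃) (hq₂ : |q₂| ≤ a₂ * Λ₃)
    (hd : |d| ≤ a₂ * s) (hc : |c| ≤ Λ₂) (hc' : |c'| ≤ Λ₄) (hu : |u| ≤ s) :
    |p₁ - q₁ + ((p₂ - q₂) * c + d * c') + p₂ * u|
      ≤ 2 * Λ₃ * a₁ + 2 * Λ₂ * Λ₃ * a₂ + (Λ₄ + Λ₃) * s * a₂ := by
  have h₁ : |(p₂ - q₂) * c| ≤ 2 * (a₂ * Λ₃) * Λ₂ := by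
    rw [abs_mul]
    exact mul_le_mul ((abs_sub _ _).trans (by linarith)) hc (abs_nonneg c)
      (by linarith [abs_nonneg p₂])
  have h₂ : |d * c'| ≤ a₂ * s * Λ₄ := by
    rw [abs_mul]; exact mul_le_mul hd hc' (abs_nonneg _) ((abs_nonneg d).trans hd)
  have h₃ : |p₂ * u| ≤ a₂ * Λ₃ * s := by
    rw [abs_mul]; exact mul_le_mul hp₂ hu (abs_nonneg _) ((abs_nonneg p₂).trans hp₂)
  linarith [abs_add_le (p₁ - q₁ + ((p₂ - q₂) * c + d * c')) (p₂ * u),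
    abs_add_le (p₁ - q₁) ((p₂ - q₂) * c + d * c'), abs_sub p₁ q₁,
    abs_add_le ((p₂ - q₂) * c) (d * c')]

theorem abs_errorDrift_sub_le {Λ₁ Λ₂ Λ₃ Λ₄ a₁ a₂ s : ℝ}
    (hg₁ : Differentiable ℝ g₁) (hg₂ : Differentiable ℝ g₂)
    (hζ : ∀ r ≥ 0, HasDerivAt ζ (ζ' r) r) (hv : ∀ r ≥ -τ, HasDerivAt v (v' r) r)
    (hζb : ∀ r ≥ 0, ‖ζ r‖ ≤ Λ₁) (hζ'b : ∀ r ≥ 0, ‖ζ' r‖ ≤ Λ₃)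
    (hvb : ∀ r ≥ -τ, |v r| ≤ Λ₂) (hv'b : ∀ r ≥ -τ, |v' r| ≤ Λ₄)
    (hg₁b : ∀ z, ‖z‖ ≤ Λ₁ + s → ‖gradient g₁ z‖ ≤ a₁)
    (hg₂b : ∀ z, ‖z‖ ≤ Λ₁ + s → ‖gradient g₂ z‖ ≤ a₂)
    (hx : ‖x‖ ≤ s) (hu : |u| ≤ s) {t t' : ℝ} (ht : 0 ≤ t) (htt' : t ≤ t') :
    |errorDrift g₁ g₂ ζ v τ x u t' - errorDrift g₁ g₂ ζ v τ x u t|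
      ≤ (t' - t) * (2 * Λ₃ * a₁ + 2 * Λ₂ * Λ₃ * a₂ + (Λ₄ + Λ₃) * s * a₂) := by
  have hs : 0 ≤ s := (norm_nonneg x).trans hx
  have hv_shift : ∀ r ≥ 0, r - τ ≥ -τ := fun r hr => by linarith
  have hinner : ∀ {g : E → ℝ} {a : ℝ}, (∀ z, ‖z‖ ≤ Λ₁ + s → ‖gradient g z‖ ≤ a) →
      ∀ r ≥ 0, ∀ z, ‖z‖ ≤ Λ₁ + s → |⟪gradient g z, ζ' r⟫| ≤ a * Λ₃ :=
    fun hgb r hr z hz => (abs_real_inner_le_norm _ _).trans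
      (mul_le_mul (hgb z hz) (hζ'b r hr) (norm_nonneg _) ((norm_nonneg _).trans (hgb z hz)))
  rw [mul_comm, ← Real.norm_eq_abs]
  refine norm_image_sub_le_of_norm_deriv_le_segment'
    (fun r hr => (hasDerivAt_errorDrift x u hg₁ hg₂ (hζ r (ht.trans hr.1))
      (hv (r - τ) (hv_shift r (ht.trans hr.1)))).hasDerivWithinAt)
    (fun r hr => ?_) t' ⟨htt', le_rfl⟩
  have hr : 0 ≤ r := ht.trans hr.1
  have hz : ‖ζ r‖ ≤ Λ₁ + s := (hζb r hr).trans (le_add_of_nonneg_right hs)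
  have hzx : ‖ζ r + x‖ ≤ Λ₁ + s := norm_add_le_of_le (hζb r hr) hx
  have hd : |g₂ (ζ r + x) - g₂ (ζ r)| ≤ a₂ * s := by
    have h := abs_image_sub_le_of_norm_gradient_le hg₂ hg₂b hz hzx
    rw [add_sub_cancel_left] at h
    exact h.trans (mul_le_mul_of_nonneg_left hx ((norm_nonneg _).trans (hg₂b _ hz)))
  exact abs_errorDrift_deriv_le (hinner hg₁b r hr _ hzx) (hinner hg₁b r hr _ hz)
    (hinner hg₂b r hr _ hzx) (hinner hg₂b r hr _ hz) hd (hvb _ (hv_shift r hr))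
    (hv'b _ (hv_shift r hr)) hu

end Drift

theorem ContDiffOn.comp_arctan {n : WithTop ℕ∞} {φ : ℝ → ℝ}
    (hφ : ContDiffOn ℝ n φ (Ioo (-(π / 2)) (π / 2))) : ContDiff ℝ n (fun x => φ (Real.arctan x)) :=
  hφ.comp_contDiff contDiff_arctan fun x => ⟨neg_pi_div_two_lt_arctan x, arctan_lt_pi_div_two x⟩

theorem contDiff_div_one_add_sq {n : WithTop ℕ∞} :
    ContDiff ℝ n (fun x : EuclideanSpace ℝ (Fin 2) => x 1 / (1 + x 0 ^ 2)) :=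
  (contDiff_piLp_apply 2).div (contDiff_const.add ((contDiff_piLp_apply 2).pow 2)) fun x => by
    positivity

theorem contDiff_Wtilde {F : ℝ → ℝ} (hF : ContDiffOn ℝ 2 F (Ioo (-(π / 2)) (π / 2))) :
    ContDiff ℝ 2 (Wtilde F) :=
  (contDiff_const.add (contDiff_const.mul (contDiff_div_one_add_sq.pow 2))).add
    (hF.comp_arctan.comp (contDiff_piLp_apply 2))

theorem contDiff_g1f {F H : ℝ → ℝ} (hF : ContDiffOn ℝ 2 F (Ioo (-(π / 2)) (π / 2)))
    (hH : ContDiff ℝ 1 H) : ContDiff ℝ 1 (g1f F H) := by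
  have h₀ : ContDiff ℝ 1 (fun x : EuclideanSpace ℝ (Fin 2) => x 0) := contDiff_piLp_apply 2
  have hden : ContDiff ℝ 1 (fun x : EuclideanSpace ℝ (Fin 2) => 1 + x 0 ^ 2) :=
    contDiff_const.add (h₀.pow 2)
  have hF' := (hF.deriv_of_isOpen isOpen_Ioo (m := 1) (by norm_num)).comp_arctan
  have hfrac : ContDiff ℝ 1 (fun x : EuclideanSpace ℝ (Fin 2) => 2 * x 0 / (1 + x 0 ^ 2)) :=
    (contDiff_const.mul h₀).div hden fun x => by positivity
  exact ((hden.neg.mul (hF'.comp h₀)).add (hfrac.mul ((contDiff_piLp_apply 2).pow 2))).sub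
    (hden.mul (hH.comp contDiff_div_one_add_sq))

theorem contDiff_g2f {G : ℝ → ℝ → ℝ}
    (hG : ContDiffOn ℝ 1 (fun p : ℝ × ℝ => G p.1 p.2) (Ioo (-(π / 2)) (π / 2) ×ˢ univ)) :
    ContDiff ℝ 1 (g2f G) :=
  (contDiff_const.add ((contDiff_piLp_apply 2).pow 2)).mul <|
    hG.comp_contDiff ((contDiff_arctan.comp (contDiff_piLp_apply 2)).prodMk contDiff_div_one_add_sq)
      fun _ => ⟨⟨neg_pi_div_two_lt_arctan _, arctan_lt_pi_div_two _⟩, mem_univ _⟩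

theorem norm_vec2_sub_vec2_left (a b c : ℝ) : ‖vec2 a b - vec2 a c‖ = |b - c| := by
  have h : vec2 a b - vec2 a c = vec2 0 (b - c) := by
    ext i; fin_cases i <;> simp [vec2]
  rw [h, EuclideanSpace.norm_eq, Fin.sum_univ_two]
  simp [vec2, Real.sqrt_sq_eq_abs]

theorem stmt_15_general
    (F H : ℝ → ℝ) (G : ℝ → ℝ → ℝ) (τ : ℝ) (hτ : 0 < τ)
    (hF : ContDiffOn ℝ 2 F (Ioo (-(π / 2)) (π / 2)))
    (hH : ContDiff ℝ 1 H)
    (hG : ContDiffOn ℝ 1 (fun p : ℝ × ℝ => G p.1 p.2) (Ioo (-(π / 2)) (π / 2) ×ˢ univ))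
    -- the reference signal
    (v_d vd' : ℝ → ℝ)
    (hvdD : ∀ t ≥ -τ, HasDerivAt v_d (vd' t) t)
    -- ζ_d and its derivatives
    (ζd ζd' ζd'' : ℝ → EuclideanSpace ℝ (Fin 2))
    (hζdD : ∀ t ≥ (0:ℝ), HasDerivAt ζd (ζd' t) t ∧ HasDerivAt ζd' (ζd'' t) t)
    -- the suprema Λ₁,…,Λ₅ (all finite)
    (Λ₁ Λ₂ Λ₃ Λ₄ Λ₅ : ℝ)
    (hb₁ : BddAbove ((fun t => ‖ζd t‖) '' Ici 0)) (hΛ₁ : Λ₁ = sSup ((fun t => ‖ζd t‖) '' Ici 0))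
    (hb₂ : BddAbove ((fun t => |v_d t|) '' Ici (-τ))) (hΛ₂ : Λ₂ = sSup ((fun t => |v_d t|) '' Ici (-τ)))
    (hb₃ : BddAbove ((fun t => ‖ζd' t‖) '' Ici 0)) (hΛ₃ : Λ₃ = sSup ((fun t => ‖ζd' t‖) '' Ici 0))
    (hb₄ : BddAbove ((fun t => |vd' t|) '' Ici (-τ))) (hΛ₄ : Λ₄ = sSup ((fun t => |vd' t|) '' Ici (-τ)))
    (hb₅ : BddAbove ((fun t => ‖ζd'' t‖) '' Ici 0)) (hΛ₅ : Λ₅ = sSup ((fun t => ‖ζd'' t‖) '' Ici 0))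
    -- the bounding functions ψ₁,…,ψ₄
    (ψ₁ ψ₂ ψ₃ ψ₄ : ℝ → ℝ)
    (hψ₁ : ∀ s ≥ (0:ℝ), ∀ ζ : EuclideanSpace ℝ (Fin 2), ‖ζ‖ ≤ Λ₁ + s →
      ‖gradient (g1f F H) ζ‖ ≤ ψ₁ s)
    (hψ₂ : ∀ s ≥ (0:ℝ), ∀ ζ : EuclideanSpace ℝ (Fin 2), ‖ζ‖ ≤ Λ₁ + s →
      ‖gradient (g2f G) ζ‖ ≤ ψ₂ s)
    (hψ₃ : ∀ s ≥ (0:ℝ), ∀ x : EuclideanSpace ℝ (Fin 2), ‖x‖ ≤ Λ₁ + s →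
      ‖gradient (Wtilde F) x‖ ≤ ψ₃ s)
    (hψ₄ : ∀ s ≥ (0:ℝ), ∀ x : EuclideanSpace ℝ (Fin 2), ‖x‖ ≤ Λ₁ + s →
      ‖fderiv ℝ (gradient (Wtilde F)) x‖ ≤ ψ₄ s)
    -- f̃, g̃, f and the function L from (H1)
    (ftil gtil : ℝ → EuclideanSpace ℝ (Fin 2) → ℝ)
    (hftil : ∀ t x, ftil t x = g1f F H (ζd t + x) - g1f F H (ζd t)
      + (g2f G (ζd t + x) - g2f G (ζd t)) * v_d (t - τ))
    (hgtil : ∀ t x, gtil t x = g2f G (ζd t + x))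
    (f : ℝ → EuclideanSpace ℝ (Fin 2) → ℝ → EuclideanSpace ℝ (Fin 2))
    (hfdef : ∀ t x u, f t x u = vec2 (x 1) (ftil t x + gtil t x * u))
    (L : ℝ → ℝ) (hL1 : ∀ s, 1 ≤ L s)
    -- the explicit function P
    (P : ℝ → ℝ)
    (hP : ∀ s, P s = (2 * Λ₃ * ψ₁ s + 2 * Λ₂ * Λ₃ * ψ₂ s + (Λ₄ + Λ₃) * s * ψ₂ s) ^ 2
      + ψ₃ s ^ 2 + 1 + ψ₄ (s * (1 + τ * L s)) * (Λ₃ + s * L s) ^ 2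
      + Λ₅ * ψ₃ (s * (1 + τ * L s))) :
    -- (i): inequality (3.5)
    (∀ s ≥ (0:ℝ), ∀ t ≥ (0:ℝ), ∀ ξ : EuclideanSpace ℝ (Fin 2), ‖ξ‖ ≤ s * (1 + τ * L s) →
      1 + |derivWithin (fun s' => derivWithin (fun s'' => Wtilde F (ζd s'' + ξ)) (Ici 0) s') (Ici 0) t|
        + 2 * s * L s * ‖derivWithin (fun s' => gradient (fun y => Wtilde F (ζd s' + y)) ξ) (Ici 0) t‖
        + s ^ 2 * L s ^ 2 * ‖fderiv ℝ (fun y => gradient (fun y' => Wtilde F (ζd t + y')) y) ξ‖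
      ≤ P s) ∧
    -- (ii): inequality (3.6)
    (∀ t ≥ (0:ℝ), ∀ x : EuclideanSpace ℝ (Fin 2),
      ‖gradient (fun y => Wtilde F (ζd t + y)) x‖ ≤ Real.sqrt (P ‖x‖)) ∧
    -- (iii): inequality (3.7)
    (∀ t ≥ (0:ℝ), ∀ s' ≥ t, ∀ x : EuclideanSpace ℝ (Fin 2), ∀ u : ℝ,
      ‖f s' x u - f t x u‖ ≤ (s' - t) * Real.sqrt (P (‖x‖ + |u|))) := by
  have hζb : ∀ r ≥ (0:ℝ), ‖ζd r‖ ≤ Λ₁ := fun r hr => le_of_eq_csSup_image hb₁ hΛ₁ hr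
  have hvb : ∀ r ≥ -τ, |v_d r| ≤ Λ₂ := fun r hr => le_of_eq_csSup_image hb₂ hΛ₂ hr
  have hζ'b : ∀ r ≥ (0:ℝ), ‖ζd' r‖ ≤ Λ₃ := fun r hr => le_of_eq_csSup_image hb₃ hΛ₃ hr
  have hv'b : ∀ r ≥ -τ, |vd' r| ≤ Λ₄ := fun r hr => le_of_eq_csSup_image hb₄ hΛ₄ hr
  have hζ''b : ∀ r ≥ (0:ℝ), ‖ζd'' r‖ ≤ Λ₅ := fun r hr => le_of_eq_csSup_image hb₅ hΛ₅ hr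
  have hA : ∀ s ≥ (0:ℝ), 0 ≤ s * (1 + τ * L s) := fun s hs => by have := hL1 s; positivity
  have hψ_nonneg : ∀ s ≥ (0:ℝ), 0 ≤ ψ₃ s ∧ 0 ≤ ψ₄ s := fun s hs => by
    have h0 : ‖(0 : EuclideanSpace ℝ (Fin 2))‖ ≤ Λ₁ + s := by
      simpa using add_nonneg ((norm_nonneg _).trans (hζb 0 le_rfl)) hs
    exact ⟨(norm_nonneg _).trans (hψ₃ s hs 0 h0), (norm_nonneg _).trans (hψ₄ s hs 0 h0)⟩
  have hP_ge := fun s (hs : 0 ≤ s) => le_of_eq_sq_add_sq_add_one_add_add (hP s)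
    (mul_nonneg (hψ_nonneg _ (hA s hs)).2 (sq_nonneg _))
    (mul_nonneg ((norm_nonneg _).trans (hζ''b 0 le_rfl)) (hψ_nonneg _ (hA s hs)).1)
  refine ⟨fun s hs t ht ξ hξ => ?_, fun t ht x => ?_, fun t ht t' htt' x u => ?_⟩
  · have hz : ‖ζd t + ξ‖ ≤ Λ₁ + s * (1 + τ * L s) := norm_add_le_of_le (hζb t ht) hξ
    exact (one_add_shifted_deriv_terms_le (contDiff_Wtilde hF) hζdD ht (hψ₃ _ (hA s hs) _ hz)
      (hψ₄ _ (hA s hs) _ hz) (hζ'b t ht) (hζ''b t ht) hs (zero_le_one.trans (hL1 s))).trans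
      (hP_ge s hs).2.2
  · rw [gradient_comp_add_left]
    exact (hψ₃ _ (norm_nonneg x) _ (norm_add_le_of_le (hζb t ht) le_rfl)).trans
      (Real.le_sqrt_of_sq_le (hP_ge _ (norm_nonneg x)).2.1)
  · have hs : 0 ≤ ‖x‖ + |u| := by positivity
    have hdrift : ∀ r, ftil r x + gtil r x * u
        = errorDrift (g1f F H) (g2f G) ζd v_d τ x u r := fun r => by rw [hftil, hgtil]; rfl
    rw [hfdef, hfdef, norm_vec2_sub_vec2_left, hdrift, hdrift]
    refine (abs_errorDrift_sub_le x u ((contDiff_g1f hF hH).differentiable one_ne_zero)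
      ((contDiff_g2f hG).differentiable one_ne_zero) (fun r hr => (hζdD r hr).1) hvdD hζb hζ'b hvb
      hv'b (hψ₁ _ hs) (hψ₂ _ hs) (le_add_of_nonneg_right (abs_nonneg u))
      (le_add_of_nonneg_left (norm_nonneg x)) ht htt').trans ?_
    exact mul_le_mul_of_nonneg_left (Real.le_sqrt_of_sq_le (hP_ge _ hs).1) (sub_nonneg.2 htt')

theorem stmt_15
    (F H : ℝ → ℝ) (G : ℝ → ℝ → ℝ) (τ : ℝ) (hτ : 0 < τ)
    (hF : ContDiffOn ℝ 2 F (Ioo (-(π / 2)) (π / 2)))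
    (hFnn : ∀ q ∈ Ioo (-(π / 2)) (π / 2), 0 ≤ F q)
    (hFtop₁ : Tendsto F (nhdsWithin (π / 2) (Iio (π / 2))) atTop)
    (hFtop₂ : Tendsto F (nhdsWithin (-(π / 2)) (Ioi (-(π / 2)))) atTop)
    (hH : ContDiff ℝ 1 H) (hHpos : ∀ y : ℝ, 0 ≤ y * H y)
    (hG : ContDiffOn ℝ 1 (fun p : ℝ × ℝ => G p.1 p.2) (Ioo (-(π / 2)) (π / 2) ×ˢ univ))
    (hGpos : ∀ q ∈ Ioo (-(π / 2)) (π / 2), ∀ y : ℝ, 0 < G q y)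
    (hGbdd : BddAbove {z : ℝ | ∃ q ∈ Ioo (-(π / 2)) (π / 2), ∃ y : ℝ, z = G q y})
    -- the reference signal
    (q_d qd' qd'' v_d vd' : ℝ → ℝ)
    (hqdmem : ∀ t ≥ (0:ℝ), q_d t ∈ Ioo (-(π / 2)) (π / 2))
    (hqdD : ∀ t ≥ (0:ℝ), HasDerivAt q_d (qd' t) t ∧ HasDerivAt qd' (qd'' t) t)
    (hvdD : ∀ t ≥ -τ, HasDerivAt v_d (vd' t) t) (hvdc : ContinuousOn vd' (Ici (-τ)))
    (hrefODE : ∀ t ≥ (0:ℝ),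
      qd'' t = -(deriv F (q_d t)) - H (qd' t) + G (q_d t) (qd' t) * v_d (t - τ))
    (hqdsup : ∃ b < π / 2, ∀ t ≥ (0:ℝ), |q_d t| ≤ b)
    -- ζ_d and its derivatives
    (ζd ζd' ζd'' : ℝ → EuclideanSpace ℝ (Fin 2))
    (hζd : ∀ t, ζd t = vec2 (Real.tan (q_d t)) (qd' t / Real.cos (q_d t) ^ 2))
    (hζdD : ∀ t ≥ (0:ℝ), HasDerivAt ζd (ζd' t) t ∧ HasDerivAt ζd' (ζd'' t) t)
    -- the suprema Λ₁,…,Λ₅ (all finite)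
    (Λ₁ Λ₂ Λ₃ Λ₄ Λ₅ : ℝ)
    (hb₁ : BddAbove ((fun t => ‖ζd t‖) '' Ici 0)) (hΛ₁ : Λ₁ = sSup ((fun t => ‖ζd t‖) '' Ici 0))
    (hb₂ : BddAbove ((fun t => |v_d t|) '' Ici (-τ))) (hΛ₂ : Λ₂ = sSup ((fun t => |v_d t|) '' Ici (-τ)))
    (hb₃ : BddAbove ((fun t => ‖ζd' t‖) '' Ici 0)) (hΛ₃ : Λ₃ = sSup ((fun t => ‖ζd' t‖) '' Ici 0))
    (hb₄ : BddAbove ((fun t => |vd' t|) '' Ici (-τ))) (hΛ₄ : Λ₄ = sSup ((fun t => |vd' t|) '' Ici (-τ)))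
    (hb₅ : BddAbove ((fun t => ‖ζd'' t‖) '' Ici 0)) (hΛ₅ : Λ₅ = sSup ((fun t => ‖ζd'' t‖) '' Ici 0))
    -- the bounding functions ψ₁,…,ψ₄
    (ψ₁ ψ₂ ψ₃ ψ₄ : ℝ → ℝ)
    (hψc : ∀ i ∈ [ψ₁, ψ₂, ψ₃, ψ₄], ContinuousOn i (Ici 0) ∧ MonotoneOn i (Ici 0) ∧
      ∀ s ≥ (0:ℝ), 0 ≤ i s)
    (hψ₁ : ∀ s ≥ (0:ℝ), ∀ ζ : EuclideanSpace ℝ (Fin 2), ‖ζ‖ ≤ Λ₁ + s →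
      ‖gradient (g1f F H) ζ‖ ≤ ψ₁ s)
    (hψ₂ : ∀ s ≥ (0:ℝ), ∀ ζ : EuclideanSpace ℝ (Fin 2), ‖ζ‖ ≤ Λ₁ + s →
      ‖gradient (g2f G) ζ‖ ≤ ψ₂ s)
    (hψ₃ : ∀ s ≥ (0:ℝ), ∀ x : EuclideanSpace ℝ (Fin 2), ‖x‖ ≤ Λ₁ + s →
      ‖gradient (Wtilde F) x‖ ≤ ψ₃ s)
    (hψ₄ : ∀ s ≥ (0:ℝ), ∀ x : EuclideanSpace ℝ (Fin 2), ‖x‖ ≤ Λ₁ + s →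
      ‖fderiv ℝ (gradient (Wtilde F)) x‖ ≤ ψ₄ s)
    -- f̃, g̃, f and the function L from (H1)
    (ftil gtil : ℝ → EuclideanSpace ℝ (Fin 2) → ℝ)
    (hftil : ∀ t x, ftil t x = g1f F H (ζd t + x) - g1f F H (ζd t)
      + (g2f G (ζd t + x) - g2f G (ζd t)) * v_d (t - τ))
    (hgtil : ∀ t x, gtil t x = g2f G (ζd t + x))
    (f : ℝ → EuclideanSpace ℝ (Fin 2) → ℝ → EuclideanSpace ℝ (Fin 2))
    (hfdef : ∀ t x u, f t x u = vec2 (x 1) (ftil t x + gtil t x * u))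
    (L : ℝ → ℝ) (hLc : Continuous L) (hLm : Monotone L) (hL1 : ∀ s, 1 ≤ L s)
    (hLip : ∀ t ≥ (0:ℝ), ∀ x y : EuclideanSpace ℝ (Fin 2), ∀ u : ℝ,
      ‖f t x u - f t y u‖ ≤ L (‖x‖ + ‖y‖ + |u|) * ‖x - y‖)
    (hgr : ∀ t ≥ (0:ℝ), ∀ x : EuclideanSpace ℝ (Fin 2), ∀ u : ℝ,
      ‖f t x u‖ ≤ (‖x‖ + |u|) * L (‖x‖ + |u|))
    -- the explicit function P
    (P : ℝ → ℝ)
    (hP : ∀ s, P s = (2 * Λ₃ * ψ₁ s + 2 * Λ₂ * Λ₃ * ψ₂ s + (Λ₄ + Λ₃) * s * ψ₂ s) ^ 2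
      + ψ₃ s ^ 2 + 1 + ψ₄ (s * (1 + τ * L s)) * (Λ₃ + s * L s) ^ 2
      + Λ₅ * ψ₃ (s * (1 + τ * L s))) :
    -- (i): inequality (3.5)
    (∀ s ≥ (0:ℝ), ∀ t ≥ (0:ℝ), ∀ ξ : EuclideanSpace ℝ (Fin 2), ‖ξ‖ ≤ s * (1 + τ * L s) →
      1 + |derivWithin (fun s' => derivWithin (fun s'' => Wtilde F (ζd s'' + ξ)) (Ici 0) s') (Ici 0) t|
        + 2 * s * L s * ‖derivWithin (fun s' => gradient (fun y => Wtilde F (ζd s' + y)) ξ) (Ici 0) t‖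
        + s ^ 2 * L s ^ 2 * ‖fderiv ℝ (fun y => gradient (fun y' => Wtilde F (ζd t + y')) y) ξ‖
      ≤ P s) ∧
    -- (ii): inequality (3.6)
    (∀ t ≥ (0:ℝ), ∀ x : EuclideanSpace ℝ (Fin 2),
      ‖gradient (fun y => Wtilde F (ζd t + y)) x‖ ≤ Real.sqrt (P ‖x‖)) ∧
    -- (iii): inequality (3.7)
    (∀ t ≥ (0:ℝ), ∀ s' ≥ t, ∀ x : EuclideanSpace ℝ (Fin 2), ∀ u : ℝ,
      ‖f s' x u - f t x u‖ ≤ (s' - t) * Real.sqrt (P (‖x‖ + |u|))) :=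
  stmt_15_general F H G τ hτ hF hH hG v_d vd' hvdD ζd ζd' ζd'' hζdD Λ₁ Λ₂ Λ₃ Λ₄ Λ₅ hb₁ hΛ₁ hb₂ hΛ₂
    hb₃ hΛ₃ hb₄ hΛ₄ hb₅ hΛ₅ ψ₁ ψ₂ ψ₃ ψ₄ hψ₁ hψ₂ hψ₃ hψ₄ ftil gtil hftil hgtil f hfdef L hL1 P hP
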